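/- Let S ≠ T be k-subsets of [n] and let C be a connected component of the multigraph h(S,T) with at least one edge. Let x_max(C) be the maximum element of C ∩ ([n]∖[k]) and y_min(C) the minimum element of C ∩ [k]. Then x_max(C) and y_min(C) are adjacent in h(S,T), i.e., (x_max(C), y_min(C)) ∈ f(S) ∪ f(T). -/

import Mathlib

/-!
A component of `h(S,T)` is a path or cycle whose edges alternate between the two matchings
`f(S)` and `f(T)`, and each matching pairs large vertices with small ones in reverse order.
If `x_max` and `y_min` both have an edge in the same matching `f(R)`, say `(x_max, a)` and
`(b, y_min)`, then `b ≤ x_max` and `y_min ≤ a` together with the order reversal force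
`b = x_max`, so `(x_max, y_min) ∈ f(R)`. Otherwise `x_max` has edges in only one matching and
`y_min` only in the other, so both are ends of an alternating path between them; but an
alternating path from a large to a small vertex has odd length, so its first and last edges
lie in the same matching, a contradiction.
-/

def matchF (k : ℕ) (S : Finset ℕ) : Finset (ℕ × ℕ) :=
  (((S \ Finset.Icc 1 k).sort (· ≤ ·)).reverse.zip
    ((Finset.Icc 1 k \ S).sort (· ≤ ·))).toFinset

def hGraph (k : ℕ) (S T : Finset ℕ) : SimpleGraph ℕ where
  Adj u v := u ≠ v ∧
    ((u, v) ∈ matchF k S ∪ matchF k T ∨ (v, u) ∈ matchF k S ∪ matchF k T)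
  symm := by constructor; rintro u v ⟨h1, h2⟩; exact ⟨h1.symm, h2.elim Or.inr Or.inl⟩
  loopless := by constructor; rintro u ⟨h1, _⟩; exact h1 rfl

open Finset SimpleGraph

theorem List.SortedGT.lt_iff_lt_of_mem_zip {α β : Type*} [LinearOrder α] [LinearOrder β]
    {l₁ : List α} {l₂ : List β} (h₁ : l₁.SortedGT) (h₂ : l₂.SortedLT) {a a' : α} {b b' : β}
    (h : (a, b) ∈ l₁.zip l₂) (h' : (a', b') ∈ l₁.zip l₂) : a' < a ↔ b < b' := by
  obtain ⟨i, hi, hab⟩ := List.mem_iff_getElem.1 h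
  obtain ⟨j, hj, hab'⟩ := List.mem_iff_getElem.1 h'
  simp only [List.getElem_zip, Prod.mk.injEq] at hab hab'
  obtain ⟨rfl, rfl⟩ := hab
  obtain ⟨rfl, rfl⟩ := hab'
  rw [h₁.getElem_lt_getElem_iff, h₂.getElem_lt_getElem_iff]

theorem SimpleGraph.Reachable.exists_adj_of_ne {V : Type*} {G : SimpleGraph V} {u w : V}
    (h : G.Reachable u w) (hne : u ≠ w) : ∃ v, G.Adj u v := by
  obtain ⟨W⟩ := h
  exact ⟨_, W.adj_snd (Walk.not_nil_of_ne hne)⟩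

section matchF

variable {k : ℕ} {R S T : Finset ℕ} {x y x' y' : ℕ}

theorem mem_sdiff_of_mem_matchF (h : (x, y) ∈ matchF k S) :
    x ∈ S \ Icc 1 k ∧ y ∈ Icc 1 k \ S := by
  obtain ⟨hx, hy⟩ := List.of_mem_zip (List.mem_toFinset.1 h)
  exact ⟨Finset.mem_sort _ |>.1 (List.mem_reverse.1 hx), Finset.mem_sort _ |>.1 hy⟩

theorem side_of_mem_matchF_union (h : (x, y) ∈ matchF k S ∪ matchF k T) :
    x ∉ Icc 1 k ∧ y ∈ Icc 1 k := by
  rcases mem_union.1 h with h | h <;>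
  · obtain ⟨hx, hy⟩ := mem_sdiff_of_mem_matchF h
    exact ⟨(mem_sdiff.1 hx).2, (mem_sdiff.1 hy).1⟩

theorem mem_Icc_of_mem_matchF {n : ℕ} (hS : S ⊆ Icc 1 n) (h : (x, y) ∈ matchF k S) :
    x ∈ Icc 1 n ∧ y ∈ Icc 1 n := by
  obtain ⟨hx, hy⟩ := mem_sdiff_of_mem_matchF h
  have hxn := mem_Icc.1 (hS (mem_sdiff.1 hx).1)
  have hxk := (mem_sdiff.1 hx).2
  have hyk := mem_Icc.1 (mem_sdiff.1 hy).1
  simp only [mem_Icc] at hxk ⊢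
  omega

theorem matchF_lt_iff (h : (x, y) ∈ matchF k S) (h' : (x', y') ∈ matchF k S) :
    x' < x ↔ y < y' :=
  (Finset.sortedLT_sort _).reverse.lt_iff_lt_of_mem_zip (Finset.sortedLT_sort _)
    (List.mem_toFinset.1 h) (List.mem_toFinset.1 h')

theorem matchF_fst_eq_iff (h : (x, y) ∈ matchF k S) (h' : (x', y') ∈ matchF k S) :
    x = x' ↔ y = y' := by
  have := matchF_lt_iff h h'
  have := matchF_lt_iff h' h
  omega

theorem mem_matchF_of_le {a b : ℕ} (hxa : (x, a) ∈ matchF k R) (hby : (b, y) ∈ matchF k R)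
    (hya : y ≤ a) (hbx : b ≤ x) : (x, y) ∈ matchF k R := by
  obtain rfl : b = x := by
    have := matchF_lt_iff hxa hby
    omega
  exact hby

end matchF

section hGraph

variable {k : ℕ} {S T : Finset ℕ} {u w x y : ℕ}

theorem hGraph_comm : hGraph k S T = hGraph k T S := by
  ext u w
  simp only [hGraph, union_comm]

theorem hGraph_adj_of_notMem (hu : u ∉ Icc 1 k) :
    (hGraph k S T).Adj u w ↔ (u, w) ∈ matchF k S ∪ matchF k T := by
  refine ⟨fun ⟨_, h⟩ => h.resolve_right fun h' => hu (side_of_mem_matchF_union h').2,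
    fun h => ⟨?_, Or.inl h⟩⟩
  rintro rfl
  exact (side_of_mem_matchF_union h).1 (side_of_mem_matchF_union h).2

theorem hGraph_adj_of_mem (hu : u ∈ Icc 1 k) :
    (hGraph k S T).Adj u w ↔ (w, u) ∈ matchF k S ∪ matchF k T := by
  refine ⟨fun ⟨_, h⟩ => h.resolve_left fun h' => (side_of_mem_matchF_union h').1 hu,
    fun h => ⟨?_, Or.inr h⟩⟩
  rintro rfl
  exact (side_of_mem_matchF_union h).1 (side_of_mem_matchF_union h).2

/-- The hypothesis on `u` forces the path to leave `u` by an `f(T)`-edge if `u` is small and by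
an `f(S)`-edge if `u` is large; injectivity of the matchings propagates this alternation along
the path, so its small end `w` carries an `f(S)`-edge. -/
theorem exists_mem_matchF_of_isPath (W : (hGraph k S T).Walk u w) (hW : W.IsPath)
    (hw : w ∈ Icc 1 k)
    (hu : if u ∈ Icc 1 k then ∃ z ∉ W.support, (z, u) ∈ matchF k S
      else ∀ z, (u, z) ∈ matchF k T → z ∉ W.support) :
    ∃ z, (z, w) ∈ matchF k S := by
  induction W with
  | nil =>
    obtain ⟨z, -, hz⟩ := if_pos hw ▸ hu
    exact ⟨z, hz⟩
  | @cons u v w huv W ih =>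
    rw [Walk.cons_isPath_iff] at hW
    have hvW : v ∈ (Walk.cons huv W).support := List.mem_cons_of_mem _ W.start_mem_support
    by_cases hu' : u ∈ Icc 1 k
    · obtain ⟨z, hzW, hzu⟩ := if_pos hu' ▸ hu
      have hvu := (hGraph_adj_of_mem hu').1 huv
      have hv := (side_of_mem_matchF_union hvu).1
      rcases mem_union.1 hvu with hvu | hvu
      · obtain rfl : v = z := (matchF_fst_eq_iff hvu hzu).2 rfl
        exact absurd hvW hzW
      · refine ih hW.1 hw (if_neg hv ▸ fun z hz => ?_)
        obtain rfl : u = z := (matchF_fst_eq_iff hvu hz).1 rfl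
        exact hW.2
    · have huv' := (hGraph_adj_of_notMem hu').1 huv
      have hv := (side_of_mem_matchF_union huv').2
      rcases mem_union.1 huv' with huv' | huv'
      · exact ih hW.1 hw (if_pos hv ▸ ⟨u, hW.2, huv'⟩)
      · exact absurd hvW ((if_neg hu' ▸ hu) v huv')

theorem hGraph_not_reachable (hx : x ∉ Icc 1 k) (hxT : ∀ z, (x, z) ∉ matchF k T)
    (hy : y ∈ Icc 1 k) (hyS : ∀ z, (z, y) ∉ matchF k S) : ¬(hGraph k S T).Reachable x y := by
  classical
  rintro ⟨W⟩
  obtain ⟨z, hz⟩ := exists_mem_matchF_of_isPath W.toPath.1 W.toPath.2 hy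
    (if_neg hx ▸ fun z hz => absurd hz (hxT z))
  exact hyS z hz

theorem mem_matchF_union_of_extremal (hxy : (hGraph k S T).Reachable x y) (hx : x ∉ Icc 1 k)
    (hy : y ∈ Icc 1 k) (hx_max : ∀ u, (hGraph k S T).Reachable x u → u ∉ Icc 1 k → u ≤ x)
    (hy_min : ∀ u, (hGraph k S T).Reachable x u → u ∈ Icc 1 k → y ≤ u) :
    (x, y) ∈ matchF k S ∪ matchF k T := by
  have of_edges : ∀ {R a b}, matchF k R ⊆ matchF k S ∪ matchF k T → (x, a) ∈ matchF k R →
      (b, y) ∈ matchF k R → (x, y) ∈ matchF k S ∪ matchF k T := by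
    intro R a b hR hxa hby
    have hxa' := ((hGraph_adj_of_notMem hx).2 (hR hxa)).reachable
    have hyb := ((hGraph_adj_of_mem hy).2 (hR hby)).reachable
    exact hR <| mem_matchF_of_le hxa hby (hy_min a hxa' (side_of_mem_matchF_union (hR hxa)).2)
      (hx_max b (hxy.trans hyb) (side_of_mem_matchF_union (hR hby)).1)
  have hne : x ≠ y := by
    rintro rfl
    exact hx hy
  obtain ⟨a, hxa⟩ := hxy.exists_adj_of_ne hne
  obtain ⟨b, hyb⟩ := hxy.symm.exists_adj_of_ne hne.symm
  have hx_edge : (∃ z, (x, z) ∈ matchF k S) ∨ ∃ z, (x, z) ∈ matchF k T :=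
    (mem_union.1 ((hGraph_adj_of_notMem hx).1 hxa)).imp (⟨a, ·⟩) (⟨a, ·⟩)
  have hy_edge : (∃ z, (z, y) ∈ matchF k S) ∨ ∃ z, (z, y) ∈ matchF k T :=
    (mem_union.1 ((hGraph_adj_of_mem hy).1 hyb)).imp (⟨b, ·⟩) (⟨b, ·⟩)
  have hTS : (∃ z, (x, z) ∈ matchF k T) ∨ ∃ z, (z, y) ∈ matchF k S := by
    by_contra! h
    exact hGraph_not_reachable hx h.1 hy h.2 hxy
  have hST : (∃ z, (x, z) ∈ matchF k S) ∨ ∃ z, (z, y) ∈ matchF k T := by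
    by_contra! h
    exact hGraph_not_reachable hx h.1 hy h.2 (hGraph_comm ▸ hxy)
  obtain ⟨⟨a, ha⟩, b, hb⟩ | ⟨⟨a, ha⟩, b, hb⟩ :
      ((∃ z, (x, z) ∈ matchF k S) ∧ ∃ z, (z, y) ∈ matchF k S) ∨
        ((∃ z, (x, z) ∈ matchF k T) ∧ ∃ z, (z, y) ∈ matchF k T) := by
    grind
  · exact of_edges subset_union_left ha hb
  · exact of_edges subset_union_right ha hb

theorem hGraph_mem_Icc_of_adj {n : ℕ} (hS : S ⊆ Icc 1 n) (hT : T ⊆ Icc 1 n)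
    (h : (hGraph k S T).Adj u w) : u ∈ Icc 1 n := by
  obtain ⟨-, h | h⟩ := h <;> rcases mem_union.1 h with h | h
  exacts [(mem_Icc_of_mem_matchF hS h).1, (mem_Icc_of_mem_matchF hT h).1,
    (mem_Icc_of_mem_matchF hS h).2, (mem_Icc_of_mem_matchF hT h).2]

end hGraph

theorem xmax_ymin_adjacent_general (n k : ℕ) (S T : Finset ℕ)
    (hSsub : S ⊆ Finset.Icc 1 n) (hTsub : T ⊆ Finset.Icc 1 n)
    (v : ℕ) (C : Finset ℕ)
    (hC : ∀ u, u ∈ C ↔ u ∈ Finset.Icc 1 n ∧ (hGraph k S T).Reachable v u)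
    (hedge : ∃ p ∈ matchF k S ∪ matchF k T, p.1 ∈ C ∧ p.2 ∈ C) :
    ∃ x y : ℕ, (C \ Finset.Icc 1 k).max = (x : ℕ) ∧
      (C ∩ Finset.Icc 1 k).min = (y : ℕ) ∧
      (x, y) ∈ matchF k S ∪ matchF k T := by
  obtain ⟨⟨p, q⟩, hpq, hp, hq⟩ := hedge
  have reachable_mem : ∀ u ∈ C, ∀ w, (hGraph k S T).Reachable u w → w ∈ C := by
    intro u hu w huw
    rw [hC] at hu ⊢
    refine ⟨?_, hu.2.trans huw⟩
    obtain rfl | hne := eq_or_ne w u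
    · exact hu.1
    · obtain ⟨z, hz⟩ := huw.symm.exists_adj_of_ne hne
      exact hGraph_mem_Icc_of_adj hSsub hTsub hz
  have hX : (C \ Icc 1 k).Nonempty := ⟨p, mem_sdiff.2 ⟨hp, (side_of_mem_matchF_union hpq).1⟩⟩
  have hY : (C ∩ Icc 1 k).Nonempty := ⟨q, mem_inter.2 ⟨hq, (side_of_mem_matchF_union hpq).2⟩⟩
  obtain ⟨hxC, hx⟩ := mem_sdiff.1 (max'_mem _ hX)
  obtain ⟨hyC, hy⟩ := mem_inter.1 (min'_mem _ hY)
  refine ⟨_, _, (coe_max' hX).symm, (coe_min' hY).symm,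
    mem_matchF_union_of_extremal ?_ hx hy (fun u hu hu' => ?_) (fun u hu hu' => ?_)⟩
  · exact ((hC _).1 hxC).2.symm.trans ((hC _).1 hyC).2
  · exact le_max' _ _ (mem_sdiff.2 ⟨reachable_mem _ hxC _ hu, hu'⟩)
  · exact min'_le _ _ (mem_inter.2 ⟨reachable_mem _ hxC _ hu, hu'⟩)

/-- In any component `C` of `h(S,T)` containing at least one edge, the largest
vertex of `C ∩ ([n]∖[k])` and the smallest vertex of `C ∩ [k]` are adjacent. -/
theorem xmax_ymin_adjacent (n k : ℕ) (hk : k ≤ n) (S T : Finset ℕ)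
    (hSsub : S ⊆ Finset.Icc 1 n) (hTsub : T ⊆ Finset.Icc 1 n)
    (hScard : S.card = k) (hTcard : T.card = k) (hST : S ≠ T)
    (v : ℕ) (C : Finset ℕ)
    (hC : ∀ u, u ∈ C ↔ u ∈ Finset.Icc 1 n ∧ (hGraph k S T).Reachable v u)
    (hedge : ∃ p ∈ matchF k S ∪ matchF k T, p.1 ∈ C ∧ p.2 ∈ C) :
    ∃ x y : ℕ, (C \ Finset.Icc 1 k).max = (x : ℕ) ∧
      (C ∩ Finset.Icc 1 k).min = (y : ℕ) ∧
      (x, y) ∈ matchF k S ∪ matchF k T :=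
  xmax_ymin_adjacent_general n k S T hSsub hTsub v C hC hedge
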